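/- arXiv:2211.03686 — 5 statements merged into one kernel-verified Lean document; each statement's English description precedes it below -/
import Mathlib

section
/- For all real a > 1 and 0 < v < 1, the function a ↦ 1 + 2a²/((a-1) + v(a+1)) attains its minimum over a > 1 at a = 2(1-v)/(1+v) whenever v < 1/3, and the minimum value is 1 + 8(1-v)/(1+v)². -/
/-- The asymptotic competitive ratio `a ↦ 1 + 2a²/((a-1) + v(a+1))` of the zig-zag
algorithm (NoDistance/Toward) attains its minimum over `a > 1` at `a = 2(1-v)/(1+v)`
whenever `v < 1/3`, with minimum value `1 + 8(1-v)/(1+v)²`. -/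
theorem zigzag_ratio_min (v : ℝ) (hv : 0 < v) (hv3 : v < 1/3) :
    1 < 2 * (1 - v) / (1 + v) ∧
    (∀ a : ℝ, 1 < a →
      1 + 8 * (1 - v) / (1 + v) ^ 2 ≤ 1 + 2 * a ^ 2 / ((a - 1) + v * (a + 1))) ∧
    1 + 2 * (2 * (1 - v) / (1 + v)) ^ 2 /
        ((2 * (1 - v) / (1 + v) - 1) + v * (2 * (1 - v) / (1 + v) + 1))
      = 1 + 8 * (1 - v) / (1 + v) ^ 2 := by
  have hv1 : (0:ℝ) < 1 + v := by linarith
  refine ⟨by rw [lt_div_iff₀ hv1]; nlinarith, ?_, ?_⟩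
  · intro a ha
    have hden : 0 < (a - 1) + v * (a + 1) := by nlinarith
    have hsq : 0 < (1 + v) ^ 2 := by positivity
    gcongr 1 + ?_
    rw [div_le_div_iff₀ hsq hden]
    nlinarith [sq_nonneg (a * (1 + v) - 2 * (1 - v))]
  · have h1 : (1:ℝ) + v ≠ 0 := by positivity
    have hd : (2 * (1 - v) / (1 + v) - 1) + v * (2 * (1 - v) / (1 + v) + 1) = 1 - v := by
      field_simp; ring
    rw [hd]
    have h2 : (1:ℝ) - v ≠ 0 := by nlinarith
    field_simp
    ring
end

section
/- For 1/3 ≤ v < 1, the function β ↦ 1 + (1+β)²/((1+βv)(β-1)) is decreasing on β > 1 and its infimum as β → ∞ equals 1 + 1/v. -/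
open Filter Topology

/- The ratio is a quotient of two quadratics with leading coefficients `1` and `v`, hence tends
to `1/v`. Cross-multiplying two values at `1 < a < b` leaves
`(b - a) * ((3v - 1) a b + (1 + v)(a + b) + 3 - v)`, which is positive as soon as `3v ≥ 1`. -/

theorem cross_mul_sub_eq (v a b : ℝ) :
    (1 + a) ^ 2 * ((1 + b * v) * (b - 1)) - (1 + b) ^ 2 * ((1 + a * v) * (a - 1)) =
      (b - a) * ((3 * v - 1) * (a * b) + (1 + v) * (a + b) + (3 - v)) := by
  ring

theorem strictAntiOn_sq_div_mul (v : ℝ) (hv : 1 / 3 ≤ v) :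
    StrictAntiOn (fun β : ℝ => (1 + β) ^ 2 / ((1 + β * v) * (β - 1))) (Set.Ioi 1) := by
  intro a (ha : 1 < a) b (hb : 1 < b) hab
  have hda : 0 < (1 + a * v) * (a - 1) := mul_pos (by nlinarith) (by linarith)
  have hdb : 0 < (1 + b * v) * (b - 1) := mul_pos (by nlinarith) (by linarith)
  have hcross : 0 < (3 * v - 1) * (a * b) + (1 + v) * (a + b) + (3 - v) := by
    have : 0 ≤ (3 * v - 1) * (a * b - 1) := mul_nonneg (by linarith) (by nlinarith)
    nlinarith
  rw [div_lt_div_iff₀ hdb hda, ← sub_pos, cross_mul_sub_eq]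
  exact mul_pos (by linarith) hcross

theorem sq_div_mul_eq_inv (v β : ℝ) (hβ : β ≠ 0) :
    (1 + β) ^ 2 / ((1 + β * v) * (β - 1)) = (1 + β⁻¹) ^ 2 / ((v + β⁻¹) * (1 - β⁻¹)) := by
  rw [show (1 + β⁻¹) ^ 2 = (1 + β) ^ 2 / β ^ 2 by field_simp; ring,
    show (v + β⁻¹) * (1 - β⁻¹) = (1 + β * v) * (β - 1) / β ^ 2 by field_simp; ring,
    div_div_div_cancel_right₀ (by positivity)]

theorem tendsto_sq_div_mul_atTop (v : ℝ) (hv : v ≠ 0) :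
    Tendsto (fun β : ℝ => (1 + β) ^ 2 / ((1 + β * v) * (β - 1))) atTop (𝓝 (1 / v)) := by
  have hcont : ContinuousAt (fun t : ℝ => (1 + t) ^ 2 / ((v + t) * (1 - t))) 0 :=
    ContinuousAt.div (by fun_prop) (by fun_prop) (by simpa using hv)
  have hlim := hcont.tendsto.comp tendsto_inv_atTop_zero
  simp only [add_zero, one_pow, sub_zero, mul_one] at hlim
  refine hlim.congr' ?_
  filter_upwards [eventually_ne_atTop 0] with β hβ
  exact (sq_div_mul_eq_inv v β hβ).symm

theorem cone_lower_fast_general (v : ℝ) (hv : 1/3 ≤ v) :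
    StrictAntiOn (fun β : ℝ => 1 + (1 + β) ^ 2 / ((1 + β * v) * (β - 1))) (Set.Ioi 1) ∧
    Tendsto (fun β : ℝ => 1 + (1 + β) ^ 2 / ((1 + β * v) * (β - 1))) atTop
      (nhds (1 + 1 / v)) :=
  ⟨fun _ ha _ hb hab => add_lt_add_right (strictAntiOn_sq_div_mul v hv ha hb hab) 1,
    (tendsto_sq_div_mul_atTop v (by linarith)).const_add 1⟩

/-- For `1/3 ≤ v < 1` the cone lower-bound function is decreasing on `β > 1` and
tends to `1 + 1/v` as `β → ∞`. -/
theorem cone_lower_fast (v : ℝ) (hv : 1/3 ≤ v) (hv1 : v < 1) :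
    StrictAntiOn (fun β : ℝ => 1 + (1 + β) ^ 2 / ((1 + β * v) * (β - 1))) (Set.Ioi 1) ∧
    Tendsto (fun β : ℝ => 1 + (1 + β) ^ 2 / ((1 + β * v) * (β - 1))) atTop
      (nhds (1 + 1 / v)) :=
  cone_lower_fast_general v hv
end

section
/- Let f_j = 2^j and suppose 1/2 < v < 1. Let i be the least index with 1 - 2^{-2^i} ≥ v. Then 2^{2^{i-1}} < 1/(1-v), and consequently 1 + 2^{1 + ∑_{j=0}^{i} 2^j}·4^{i+1} ≤ 1 + 16·(log₂(1/(1-v)))²/(1-v)⁴. -/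
open Finset Real

lemma aux_geom_sum (n : ℕ) : 1 + ∑ j ∈ Finset.range n, 2 ^ j = 2 ^ n := by
  induction n with
  | zero => simp
  | succ k ih => rw [Finset.sum_range_succ, pow_succ]; omega

/-- NoSpeed/Away bound with doubling sequence `f j = 2^j`: if `i` is the least index
whose speed guess `1 - 2^{-2^i}` is at least the true speed `v > 1/2`, then
`2^{2^{i-1}} < 1/(1-v)` and the round bound is at most
`1 + 16·(log₂(1/(1-v)))²/(1-v)⁴`. -/
theorem noSpeed_away_doubling (v : ℝ) (hv : 1/2 < v) (hv1 : v < 1) (i : ℕ)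
    (hi : v ≤ 1 - 1 / 2 ^ (2 ^ i)) (hleast : ∀ j < i, 1 - 1 / 2 ^ (2 ^ j) < v) :
    (2 : ℝ) ^ (2 ^ (i - 1)) < 1 / (1 - v) ∧
    1 + (2 : ℝ) ^ (1 + ∑ j ∈ range (i + 1), 2 ^ j) * 4 ^ (i + 1)
      ≤ 1 + 16 * (logb 2 (1 / (1 - v))) ^ 2 / (1 - v) ^ 4 := by
  have hw : 0 < 1 - v := by linarith
  have hA : (2 : ℝ) ^ (2 ^ (i - 1)) < 1 / (1 - v) := by
    rcases Nat.eq_zero_or_pos i with h0 | hpos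
    · subst h0
      rw [lt_div_iff₀ hw]
      norm_num
      linarith
    · have hj := hleast (i - 1) (Nat.sub_lt hpos one_pos)
      have hp : (0 : ℝ) < 2 ^ (2 ^ (i - 1)) := by positivity
      rw [lt_div_iff₀ hw, mul_comm, ← lt_div_iff₀ hp]
      linarith
  refine ⟨hA, ?_⟩
  set L := Real.logb 2 (1 / (1 - v)) with hLdef
  have hLgt : (2 : ℝ) ^ (i - 1) < L := by
    have h := Real.logb_lt_logb (by norm_num : (1:ℝ) < 2) (by positivity) hA
    rw [Real.logb_pow] at h
    simp [Real.logb_self_eq_one] at h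
    rw [hLdef, one_div, Real.logb_inv]
    linarith
  have hLpos : 0 < L := lt_of_le_of_lt (by positivity) hLgt
  rw [aux_geom_sum]
  have h1 : (2 : ℝ) ^ (2 ^ (i + 1)) ≤ (1 / (1 - v)) ^ 4 := by
    have e1 : (2 : ℝ) ^ (2 ^ (i + 1)) ≤ ((2 : ℝ) ^ (2 ^ (i - 1))) ^ 4 := by
      rw [← pow_mul]
      apply pow_le_pow_right₀ (by norm_num : (1:ℝ) ≤ 2)
      rcases i with _ | k
      · norm_num
      · simp only [Nat.add_sub_cancel]
        rw [pow_succ, pow_succ]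
        omega
    exact e1.trans (pow_le_pow_left₀ (by positivity) hA.le 4)
  have h2 : (4 : ℝ) ^ (i + 1) ≤ 16 * L ^ 2 := by
    calc (4 : ℝ) ^ (i + 1) ≤ 4 ^ (i - 1 + 2) :=
          pow_le_pow_right₀ (by norm_num) (by omega)
      _ = 16 * 4 ^ (i - 1) := by rw [pow_add]; ring
      _ = 16 * ((2 : ℝ) ^ (i - 1)) ^ 2 := by
          rw [← pow_mul, mul_comm (i-1) 2, pow_mul]; norm_num
      _ ≤ 16 * L ^ 2 := by
          have := pow_le_pow_left₀ (by positivity : (0:ℝ) ≤ 2 ^ (i-1)) hLgt.le 2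
          linarith
  have key : (2 : ℝ) ^ (2 ^ (i + 1)) * 4 ^ (i + 1) ≤ (1 / (1 - v)) ^ 4 * (16 * L ^ 2) :=
    mul_le_mul h1 h2 (by positivity) (by positivity)
  have heq : (1 / (1 - v)) ^ 4 * (16 * L ^ 2) = 16 * L ^ 2 / (1 - v) ^ 4 := by
    field_simp
  linarith
end

section
/- For any algorithm searching for a target of known initial distance d moving toward the origin at unknown speed, the competitive ratio is at least 3: formally, for every ε > 0 there exists a speed v > 0 and adversarial target placement such that the ratio of catch time to d/(1+v) is at least 3 - 3ε. -/
/-- NoSpeed/Toward lower bound: for any search trajectory `X` (speed at most 1,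
starting at the origin) and any known initial distance `d ≥ 1`, and for every
`ε > 0`, there is a speed `v > 0` and a side `σ = ±1` on which the adversary places
the target (at `±d`, moving toward the origin, position `σ(d - v·t)`) such that
every meeting time `T` satisfies `T / (d/(1+v)) ≥ 3 - 3ε`. -/
theorem noSpeed_toward_lower (d : ℝ) (hd : 1 ≤ d) (X : ℝ → ℝ)
    (hX0 : X 0 = 0) (hLip : LipschitzWith 1 X) :
    ∀ ε > (0 : ℝ), ∃ v > (0 : ℝ), ∃ σ : ℝ, (σ = 1 ∨ σ = -1) ∧
      ∀ T ≥ (0 : ℝ), X T = σ * (d - v * T) → 3 - 3 * ε ≤ T / (d / (1 + v)) := by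
  intro ε hε
  rcases le_or_gt 1 ε with hε1 | hε1
  · refine ⟨1, one_pos, 1, Or.inl rfl, fun T hT _ => ?_⟩
    have h0 : (0:ℝ) ≤ T / (d / (1 + 1)) := by
      apply div_nonneg hT
      positivity
    linarith
  · -- ε < 1
    have hd0 : (0:ℝ) < d := by linarith
    have h1ε : (0:ℝ) < 1 + ε := by linarith
    set B : ℝ := (3 - 3 * ε) * (d / (1 + ε)) with hBdef
    have hLX : ∀ a b : ℝ, |X a - X b| ≤ |a - b| := by
      intro a b
      have := hLip.dist_le_mul a b
      simpa [Real.dist_eq] using this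
    have hXle : ∀ t : ℝ, 0 ≤ t → |X t| ≤ t := by
      intro t ht
      have h := hLX t 0
      simpa [hX0, abs_of_nonneg ht] using h
    have hconc : ∀ T : ℝ, (3 - 3 * ε) * d ≤ T * (1 + ε) →
        3 - 3 * ε ≤ T / (d / (1 + ε)) := by
      intro T hT
      rw [le_div_iff₀ (by positivity), mul_div_assoc', div_le_iff₀ h1ε]
      linarith
    have hTB : ∀ T : ℝ, T < B → T * (1 + ε) < (3 - 3 * ε) * d := by
      intro T hT
      have : T * (1 + ε) < B * (1 + ε) :=
        mul_lt_mul_of_pos_right hT h1ε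
      calc T * (1 + ε) < B * (1 + ε) := this
        _ = (3 - 3 * ε) * d := by
            rw [hBdef]; field_simp
    have hline : ∀ t : ℝ, 0 ≤ t → t < B → 0 < d - ε * t := by
      intro t ht htB
      have h1 : t * (1 + ε) < (3 - 3 * ε) * d := hTB t htB
      nlinarith [sq_nonneg (1 - ε), sq_nonneg ε]
    by_cases hA : ∃ s, 0 ≤ s ∧ s < B ∧ d - ε * s ≤ |X s|
    · obtain ⟨s, hs0, hsB, hsX⟩ := hA
      set A : Set ℝ := Set.Icc 0 s ∩ {t | d - ε * t ≤ |X t|} with hAdef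
      have hAne : A.Nonempty := ⟨s, ⟨hs0, le_refl s⟩, hsX⟩
      have hAclosed : IsClosed A := by
        apply isClosed_Icc.inter
        exact isClosed_le (by continuity) (hLip.continuous.abs)
      have hAbdd : BddBelow A := ⟨0, fun t ht => ht.1.1⟩
      set t1 := sInf A with ht1def
      have ht1A : t1 ∈ A := hAclosed.csInf_mem hAne hAbdd
      have ht1min : ∀ t ∈ A, t1 ≤ t := fun t ht => csInf_le hAbdd ht
      have ht10 : 0 ≤ t1 := ht1A.1.1
      have ht1s : t1 ≤ s := ht1A.1.2
      have ht1B : t1 < B := lt_of_le_of_lt ht1s hsB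
      have ht1X : d - ε * t1 ≤ |X t1| := ht1A.2
      have ht1ge : d ≤ t1 * (1 + ε) := by
        have := hXle t1 ht10
        nlinarith
      rcases le_or_gt 0 (X t1) with hpos | hneg
      · -- target on the left: σ = -1
        refine ⟨ε, hε, -1, Or.inr rfl, fun T hT hmeet => ?_⟩
        rcases lt_or_ge T t1 with hTt1 | hTt1
        · exfalso
          have hTA : T ∈ A := by
            refine ⟨⟨hT, le_trans hTt1.le ht1s⟩, ?_⟩
            show d - ε * T ≤ |X T|
            rw [hmeet, neg_one_mul, abs_neg]
            exact le_abs_self _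
          have := ht1min T hTA
          linarith
        · apply hconc
          have hXt1 : d - ε * t1 ≤ X t1 := by
            rwa [abs_of_nonneg hpos] at ht1X
          have hd2 := hLX t1 T
          have habs : |t1 - T| = T - t1 := by
            rw [abs_sub_comm, abs_of_nonneg (by linarith)]
          have h3 : X t1 - X T ≤ T - t1 := (le_abs_self _).trans (habs ▸ hd2)
          rw [hmeet] at h3
          have h4 : 2 * d + t1 * (1 - ε) ≤ T * (1 + ε) := by linarith
          nlinarith [mul_le_mul_of_nonneg_right h4 h1ε.le,
            mul_le_mul_of_nonneg_right ht1ge (show (0:ℝ) ≤ 1 - ε by linarith),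
            mul_nonneg hd0.le (sq_nonneg ε), mul_nonneg hd0.le hε.le]
      · -- target on the right: σ = 1
        refine ⟨ε, hε, 1, Or.inl rfl, fun T hT hmeet => ?_⟩
        rcases lt_or_ge T t1 with hTt1 | hTt1
        · exfalso
          have hTA : T ∈ A := by
            refine ⟨⟨hT, le_trans hTt1.le ht1s⟩, ?_⟩
            show d - ε * T ≤ |X T|
            rw [hmeet, one_mul]
            exact le_abs_self _
          have := ht1min T hTA
          linarith
        · apply hconc
          have hXt1 : d - ε * t1 ≤ -X t1 := by
            rw [abs_of_neg hneg] at ht1X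
            linarith
          have hd2 := hLX T t1
          have habs : |T - t1| = T - t1 := abs_of_nonneg (by linarith)
          have h3 : X T - X t1 ≤ T - t1 := (le_abs_self _).trans (habs ▸ hd2)
          rw [hmeet] at h3
          have h4 : 2 * d + t1 * (1 - ε) ≤ T * (1 + ε) := by linarith
          nlinarith [mul_le_mul_of_nonneg_right h4 h1ε.le,
            mul_le_mul_of_nonneg_right ht1ge (show (0:ℝ) ≤ 1 - ε by linarith),
            mul_nonneg hd0.le (sq_nonneg ε), mul_nonneg hd0.le hε.le]
    · -- no crossing before B : σ = 1 works
      push_neg at hA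
      refine ⟨ε, hε, 1, Or.inl rfl, fun T hT hmeet => ?_⟩
      apply hconc
      by_contra hcon
      push_neg at hcon
      have hTltB : T < B := by
        rw [hBdef, mul_div_assoc', lt_div_iff₀ h1ε]
        linarith
      have h := hA T hT hTltB
      rw [hmeet, one_mul] at h
      exact absurd (le_abs_self (d - ε * T)) (not_le.mpr h)
end

section
/- Let f, g : ℕ → ℕ be strictly increasing with f(0) = 1, g(0) = 0, and define v_i = 1 - 2^{-f_i}. If a sequence (x_i) satisfies x_0 = 1 and x_{i+1} ≤ 2^{f_{i+1}}·4·x_i + 2^{f_{i+1}+g_{i+1}} for all i, then x_{i+1} ≤ ∑_{k=0}^{i+1} 2^{g_k + ∑_{j=k}^{i+1} f_j}·4^{i-k+1} for all i. -/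
open Finset

/-- Recurrence bound from the NoKnowledge/Away analysis (Algorithm 6), where `x i` is
the search distance in round `i`, with speed guesses `1 - 2^{-f i}` and distance
guesses `2^{g i}`. -/
theorem noKnowledge_away_recurrence (f g : ℕ → ℕ) (hf : StrictMono f)
    (hg : StrictMono g) (hf0 : f 0 = 1) (hg0 : g 0 = 0)
    (x : ℕ → ℝ) (hx0 : x 0 = 1)
    (hx : ∀ i, x (i + 1) ≤ 2 ^ f (i + 1) * 4 * x i + 2 ^ (f (i + 1) + g (i + 1))) :
    ∀ i, x (i + 1) ≤
      ∑ k ∈ range (i + 2), (2 : ℝ) ^ (g k + ∑ j ∈ Icc k (i + 1), f j) * 4 ^ (i + 1 - k) := by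
  have key : ∀ n, x n ≤
      ∑ k ∈ range (n + 1), (2 : ℝ) ^ (g k + ∑ j ∈ Icc k n, f j) * 4 ^ (n - k) := by
    intro n
    induction n with
    | zero =>
      simp [hx0, hf0, hg0]
    | succ n ih =>
      have hstep :
          (2 : ℝ) ^ f (n + 1) * 4 *
              (∑ k ∈ range (n + 1), (2 : ℝ) ^ (g k + ∑ j ∈ Icc k n, f j) * 4 ^ (n - k)) +
            2 ^ (f (n + 1) + g (n + 1)) =
          ∑ k ∈ range (n + 2),
            (2 : ℝ) ^ (g k + ∑ j ∈ Icc k (n + 1), f j) * 4 ^ (n + 1 - k) := by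
        conv_rhs => rw [Finset.sum_range_succ]
        rw [Finset.mul_sum]
        congr 1
        · apply Finset.sum_congr rfl
          intro k hk
          have hk' : k ≤ n := Nat.lt_succ_iff.mp (Finset.mem_range.mp hk)
          rw [Finset.sum_Icc_succ_top (Nat.le_succ_of_le hk'),
            Nat.succ_sub hk']
          rw [pow_add, pow_add, pow_succ]
          ring
        · rw [Nat.sub_self, Finset.Icc_self, Finset.sum_singleton, add_comm (g (n+1))]
          simp
      calc x (n + 1) ≤ 2 ^ f (n + 1) * 4 * x n + 2 ^ (f (n + 1) + g (n + 1)) := hx n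
        _ ≤ 2 ^ f (n + 1) * 4 *
              (∑ k ∈ range (n + 1), (2 : ℝ) ^ (g k + ∑ j ∈ Icc k n, f j) * 4 ^ (n - k)) +
            2 ^ (f (n + 1) + g (n + 1)) := by gcongr
        _ = _ := hstep
  intro i
  exact key (i + 1)
end
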